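/- arXiv:1401.3935 — 2 statements merged into one kernel-verified Lean document; each statement's English description precedes it below -/
import Mathlib

section
/- Let Ḡ = (G, ω) be a vertex-weighted graph with a bridge e with endpoints v1, v2, components G1, G2 as above, d ∈ Div(G) with restrictions d1, d2. Then r_Ḡ(d) ≤ r_Ḡ1(d1 − [v1]) + r_Ḡ2(d2 − [v2]) + 2 if v_i ∉ Bs(|d_i|•) for both i = 1, 2, and r_Ḡ(d) ≤ r_Ḡ1(d1 − [v1]) + r_Ḡ2(d2 − [v2]) + 1 otherwise. -/
/-!
On the virtual loopless graph the bridge join of `(G₁, ω₁)` and `(G₂, ω₂)` is the bridge join of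
`Ḡ₁•` and `Ḡ₂•`. A rational function `f` on a bridge join restricts to each side, and on each side
its divisor only differs from the restriction by `k` chips at the endpoint of the bridge, where `k`
is the drop of `f` across the bridge. Hence, for `c₁ + c₂ = 1`, if `eᵢ` are effective divisors of
degree `rᵢ(dᵢ - cᵢ[vᵢ]) + 1` witnessing the ranks on the two sides, `d - e₁ - e₂` is not
winnable, since either `k ≥ c₁` or `k ≤ -c₂`; this is the bridge inequality
`r(d) ≤ r₁(d₁ - c₁[v₁]) + r₂(d₂ - c₂[v₂]) + 1`. The theorem follows from the cases
`(c₁, c₂) = (1, 0)` and `(0, 1)`, together with `r(x) ≤ r(x - [v]) + 1` and, at a base-point `v`,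
`r(x - [v]) = r(x)`.
-/

open scoped Classical

namespace BN

/-- A finite multigraph: `E u v` is the number of edges (other than loops)
between distinct vertices `u` and `v`, and `loops v` is the number of loops at `v`. -/
structure MultiGraph (V : Type) where
  E : V → V → ℕ
  loops : V → ℕ
  symm : ∀ u v, E u v = E v u
  noDiag : ∀ v, E v v = 0

variable {V V1 V2 : Type}

/-- The divisor `[v]`. -/
def one [DecidableEq V] (v : V) : V → ℤ := fun w => if w = v then 1 else 0

/-- Degree of a divisor. -/
def deg [Fintype V] (d : V → ℤ) : ℤ := ∑ v, d v

/-- Effective divisor. -/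
def Effective (d : V → ℤ) : Prop := ∀ v, 0 ≤ d v

namespace MultiGraph

/-- Divisor of a rational function (loops contribute nothing). -/
def div [Fintype V] (G : MultiGraph V) (f : V → ℤ) : V → ℤ :=
  fun v => ∑ w, (G.E v w : ℤ) * (f w - f v)

def Principal [Fintype V] (G : MultiGraph V) (d : V → ℤ) : Prop :=
  ∃ f : V → ℤ, d = G.div f

def LinEquiv [Fintype V] (G : MultiGraph V) (d d' : V → ℤ) : Prop :=
  G.Principal (d' - d)

/-- `d` is linearly equivalent to an effective divisor. -/
def Winnable [Fintype V] (G : MultiGraph V) (d : V → ℤ) : Prop :=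
  ∃ e : V → ℤ, Effective e ∧ G.LinEquiv d e

/-- The Baker–Norine rank of a divisor. -/
noncomputable def rank [Fintype V] (G : MultiGraph V) (d : V → ℤ) : ℤ :=
  if G.Winnable d then
    (sSup {s : ℕ | ∀ e : V → ℤ, Effective e → deg e = (s : ℤ) → G.Winnable (d - e)} : ℕ)
  else -1

def Connected (G : MultiGraph V) : Prop :=
  ∀ u v : V, Relation.ReflTransGen (fun a b => 0 < G.E a b) u v

def Loopless (G : MultiGraph V) : Prop := ∀ v, G.loops v = 0

/-- Number of edges from `v` to vertices outside `A`. -/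
def outdeg [Fintype V] [DecidableEq V] (G : MultiGraph V) (A : Finset V) (v : V) : ℕ :=
  ∑ w ∈ Finset.univ.filter (fun w => w ∉ A), G.E v w

/-- `v0`-reduced divisor. -/
def Reduced [Fintype V] [DecidableEq V] (G : MultiGraph V) (v0 : V) (d : V → ℤ) : Prop :=
  (∀ v, v ≠ v0 → 0 ≤ d v) ∧
  ∀ A : Finset V, A.Nonempty → v0 ∉ A → ∃ v ∈ A, d v < (G.outdeg A v : ℤ)

def valence [Fintype V] (G : MultiGraph V) (v : V) : ℕ :=
  (∑ w, G.E v w) + 2 * G.loops v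

/-- Canonical divisor. -/
def K [Fintype V] (G : MultiGraph V) : V → ℤ := fun v => (G.valence v : ℤ) - 2

def edgeCount [Fintype V] (G : MultiGraph V) : ℕ :=
  (∑ v, ∑ w, G.E v w) / 2 + ∑ v, G.loops v

end MultiGraph

open MultiGraph

/-- The graph obtained by joining `G1` and `G2` by a single bridge from `v1` to `v2`. -/
def bridgeJoin [DecidableEq V1] [DecidableEq V2]
    (G1 : MultiGraph V1) (G2 : MultiGraph V2) (v1 : V1) (v2 : V2) :
    MultiGraph (V1 ⊕ V2) where
  E x y :=
    match x, y with
    | .inl a, .inl b => G1.E a b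
    | .inr a, .inr b => G2.E a b
    | .inl a, .inr b => if a = v1 ∧ b = v2 then 1 else 0
    | .inr b, .inl a => if a = v1 ∧ b = v2 then 1 else 0
  loops := Sum.elim G1.loops G2.loops
  symm := by rintro (a | a) (b | b) <;> simp [G1.symm, G2.symm]
  noDiag := by rintro (a | a) <;> simp [G1.noDiag, G2.noDiag]

/-- The virtual loopless graph `Ḡ•` of a vertex-weighted graph `(G, ω)`:
insert a vertex into each loop of `G` and add `ω v` subdivided loops at each `v`.
The inserted vertices are the pairs `⟨v, i⟩` with `i : Fin (G.loops v + ω v)`,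
each joined to `v` by two parallel edges. -/
noncomputable def bullet (G : MultiGraph V) (ω : V → ℕ) :
    MultiGraph (V ⊕ (Σ v : V, Fin (G.loops v + ω v))) where
  E x y :=
    match x, y with
    | .inl u, .inl v => G.E u v
    | .inl u, .inr w => if u = w.1 then 2 else 0
    | .inr w, .inl u => if u = w.1 then 2 else 0
    | .inr _, .inr _ => 0
  loops := fun _ => 0
  symm := by rintro (u | u) (v | v) <;> simp [G.symm]
  noDiag := by rintro (v | v) <;> simp [G.noDiag]

/-- The rank `r_Ḡ(d)` of a divisor on a vertex-weighted graph `(G, ω)`: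
the Baker–Norine rank of `d` on `Ḡ•`. -/
noncomputable def wrank [Fintype V] [DecidableEq V] (G : MultiGraph V) (ω : V → ℕ)
    (d : V → ℤ) : ℤ :=
  (bullet G ω).rank (Sum.elim d 0)

/-- `v` is a base-point of the complete linear system `|d|•` on `Ḡ•`. -/
def wBasePoint [Fintype V] [DecidableEq V] (G : MultiGraph V) (ω : V → ℕ)
    (d : V → ℤ) (v : V) : Prop :=
  wrank G ω (d - one v) = wrank G ω d

/-- Genus of a vertex-weighted graph. -/
def genus [Fintype V] (G : MultiGraph V) (ω : V → ℕ) : ℤ :=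
  (G.edgeCount : ℤ) - Fintype.card V + 1 + ∑ v, (ω v : ℤ)

/-- A vertex-weighted graph of genus `≥ 2` is hyperelliptic if `Ḡ•` carries a
divisor of degree `2` and rank `1`. -/
def Hyperelliptic [Fintype V] [DecidableEq V] (G : MultiGraph V) (ω : V → ℕ) : Prop :=
  2 ≤ genus G ω ∧ ∃ d, deg d = 2 ∧ (bullet G ω).rank d = 1

/-- The canonical divisor `K_Ḡ` of a vertex-weighted graph, viewed as a divisor on `G`. -/
noncomputable def wK [Fintype V] (G : MultiGraph V) (ω : V → ℕ) : V → ℤ :=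
  fun v => (bullet G ω).K (Sum.inl v)


section Divisors

lemma one_nonneg [DecidableEq V] (v : V) : 0 ≤ one v := fun w => by
  unfold one; split <;> norm_num

lemma sum_elim_sub_smul_one_inl {W : Type} [DecidableEq V] [DecidableEq W]
    (x : V → ℤ) (y : W → ℤ) (c : ℤ) (v : V) :
    Sum.elim x y - c • one (Sum.inl v) = Sum.elim (x - c • one v) y := by
  funext w
  rcases w with w | w <;> simp [one]

variable [Fintype V]

lemma deg_add (d e : V → ℤ) : deg (d + e) = deg d + deg e := Finset.sum_add_distrib

lemma deg_sub (d e : V → ℤ) : deg (d - e) = deg d - deg e := Finset.sum_sub_distrib _ _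

lemma deg_smul (c : ℤ) (d : V → ℤ) : deg (c • d) = c * deg d := by
  simp [deg, Finset.mul_sum]

lemma deg_one [DecidableEq V] (v : V) : deg (one v) = 1 := by
  simp [deg, one]

lemma deg_comp_equiv {W : Type} [Fintype W] (φ : W ≃ V) (d : V → ℤ) : deg (d ∘ φ) = deg d :=
  φ.sum_comp d

lemma Effective.deg_nonneg {e : V → ℤ} (h : Effective e) : 0 ≤ deg e :=
  Finset.sum_nonneg fun v _ => h v

lemma Effective.eq_zero_of_deg_eq_zero {e : V → ℤ} (h : Effective e) (hdeg : deg e = 0) :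
    e = 0 :=
  funext fun v => (Finset.sum_eq_zero_iff_of_nonneg fun v _ => h v).1 hdeg v (Finset.mem_univ v)

end Divisors

namespace MultiGraph

variable [Fintype V] (G : MultiGraph V)

lemma deg_div (f : V → ℤ) : deg (G.div f) = 0 := by
  have hswap : ∑ v, ∑ w, (G.E v w : ℤ) * f w = ∑ v, ∑ w, (G.E v w : ℤ) * f v := by
    rw [Finset.sum_comm]
    simp_rw [G.symm]
  simp only [deg, MultiGraph.div, mul_sub, Finset.sum_sub_distrib, hswap, sub_self]

variable {G}

lemma Winnable.mono {d d' : V → ℤ} (h : G.Winnable d) (hle : d ≤ d') : G.Winnable d' := by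
  obtain ⟨e, he, f, hf⟩ := h
  exact ⟨e + (d' - d), fun v => add_nonneg (he v) (sub_nonneg.2 (hle v)), f, by rw [← hf]; abel⟩

lemma Winnable.deg_nonneg {d : V → ℤ} (h : G.Winnable d) : 0 ≤ deg d := by
  obtain ⟨e, he, f, hf⟩ := h
  have h0 : deg (e - d) = 0 := by rw [hf, deg_div]
  rw [deg_sub] at h0
  linarith [he.deg_nonneg]

variable (G)

def rankSet (d : V → ℤ) : Set ℕ :=
  {s | ∀ e : V → ℤ, Effective e → deg e = s → G.Winnable (d - e)}

variable {G}

lemma rank_of_winnable {d : V → ℤ} (hw : G.Winnable d) : G.rank d = sSup (G.rankSet d) := by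
  simp only [MultiGraph.rank, if_pos hw, rankSet]

lemma rank_of_not_winnable {d : V → ℤ} (hw : ¬ G.Winnable d) : G.rank d = -1 := by
  simp only [MultiGraph.rank, if_neg hw]

lemma zero_mem_rankSet {d : V → ℤ} (hw : G.Winnable d) : 0 ∈ G.rankSet d := by
  intro e he hdeg
  rw [he.eq_zero_of_deg_eq_zero (by exact_mod_cast hdeg), sub_zero]
  exact hw

lemma le_deg_of_mem_rankSet [DecidableEq V] {d : V → ℤ} {s : ℕ} (v : V) (hs : s ∈ G.rankSet d) :
    (s : ℤ) ≤ deg d := by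
  have hw := hs ((s : ℤ) • one v) (smul_nonneg (by positivity) (one_nonneg v))
    (by rw [deg_smul, deg_one, mul_one])
  have := hw.deg_nonneg
  rw [deg_sub, deg_smul, deg_one] at this
  linarith

lemma bddAbove_rankSet [Nonempty V] [DecidableEq V] (d : V → ℤ) : BddAbove (G.rankSet d) :=
  ⟨(deg d).toNat, fun _ hs => by have := le_deg_of_mem_rankSet (Classical.arbitrary V) hs; omega⟩

lemma winnable_sub_of_deg_le_rank [Nonempty V] [DecidableEq V] {d e : V → ℤ}
    (he : Effective e) (hle : deg e ≤ G.rank d) : G.Winnable (d - e) := by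
  have hw : G.Winnable d := by
    by_contra hw
    rw [rank_of_not_winnable hw] at hle
    linarith [he.deg_nonneg]
  rw [rank_of_winnable hw] at hle
  set s := sSup (G.rankSet d)
  have hs : s ∈ G.rankSet d := Nat.sSup_mem ⟨0, zero_mem_rankSet hw⟩ (bddAbove_rankSet d)
  -- `rankSet` only tests divisors of degree exactly `s`, so pad `e` up to that degree
  set pad := ((s : ℤ) - deg e) • one (Classical.arbitrary V)
  have hpad : 0 ≤ pad := smul_nonneg (by linarith) (one_nonneg _)
  refine (hs (e + pad) (add_nonneg he hpad) ?_).mono ?_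
  · rw [deg_add, deg_smul, deg_one]; ring
  · rw [sub_add_eq_sub_sub]; exact sub_le_self _ hpad

lemma rank_lt_deg_of_not_winnable_sub [Nonempty V] [DecidableEq V] {d e : V → ℤ}
    (he : Effective e) (hnw : ¬ G.Winnable (d - e)) : G.rank d < deg e :=
  lt_of_not_ge fun hle => hnw (winnable_sub_of_deg_le_rank he hle)

lemma exists_effective_not_winnable_sub [Nonempty V] (d : V → ℤ) :
    ∃ e : V → ℤ, Effective e ∧ deg e = G.rank d + 1 ∧ ¬ G.Winnable (d - e) := by
  by_cases hw : G.Winnable d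
  · rw [rank_of_winnable hw]
    set s := sSup (G.rankSet d)
    have hnot : s + 1 ∉ G.rankSet d := fun hmem => by
      have := le_csSup (bddAbove_rankSet d) hmem
      omega
    simp only [rankSet, Set.mem_ofPred_eq, not_forall] at hnot
    obtain ⟨e, he, hdeg, hnw⟩ := hnot
    exact ⟨e, he, by rw [hdeg]; push_cast; rfl, hnw⟩
  · exact ⟨0, fun _ => le_refl 0, by simp [rank_of_not_winnable hw, deg], by simpa using hw⟩

lemma rank_le_rank_sub_one_add_one [DecidableEq V] (d : V → ℤ) (v : V) :
    G.rank d ≤ G.rank (d - one v) + 1 := by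
  have : Nonempty V := ⟨v⟩
  obtain ⟨e, he, hdeg, hnw⟩ := exists_effective_not_winnable_sub (G := G) (d - one v)
  have hlt := rank_lt_deg_of_not_winnable_sub (d := d) (e := e + one v)
    (add_nonneg he (one_nonneg v)) (by rwa [sub_add_eq_sub_sub_swap])
  rw [deg_add, deg_one, hdeg] at hlt
  omega

end MultiGraph

section BridgeJoin

variable {U1 U2 : Type} [Fintype U1] [Fintype U2]

lemma deg_sum_elim (e1 : U1 → ℤ) (e2 : U2 → ℤ) : deg (Sum.elim e1 e2) = deg e1 + deg e2 :=
  Fintype.sum_sum_type _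

variable [DecidableEq U1] [DecidableEq U2]
  (W1 : MultiGraph U1) (W2 : MultiGraph U2) (a1 : U1) (a2 : U2)

lemma bridgeJoin_div_comp_inl (f : U1 ⊕ U2 → ℤ) :
    (bridgeJoin W1 W2 a1 a2).div f ∘ Sum.inl =
      W1.div (f ∘ Sum.inl) + (f (Sum.inr a2) - f (Sum.inl a1)) • one a1 := by
  funext w
  simp only [MultiGraph.div, bridgeJoin, Fintype.sum_sum_type, Function.comp_apply]
  by_cases hw : w = a1
  · subst hw; simp [MultiGraph.div, one]
  · simp [MultiGraph.div, one, hw]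

lemma bridgeJoin_div_comp_inr (f : U1 ⊕ U2 → ℤ) :
    (bridgeJoin W1 W2 a1 a2).div f ∘ Sum.inr =
      W2.div (f ∘ Sum.inr) - (f (Sum.inr a2) - f (Sum.inl a1)) • one a2 := by
  funext w
  simp only [MultiGraph.div, bridgeJoin, Fintype.sum_sum_type, Function.comp_apply]
  by_cases hw : w = a2
  · subst hw; simp [MultiGraph.div, one]; ring
  · simp [MultiGraph.div, one, hw]

variable {W1 W2 a1 a2}

/-- The witness `k` is the drop of the rational function across the bridge. -/
lemma MultiGraph.Winnable.exists_of_bridgeJoin {D : U1 ⊕ U2 → ℤ}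
    (h : (bridgeJoin W1 W2 a1 a2).Winnable D) :
    ∃ k : ℤ, W1.Winnable (D ∘ Sum.inl - k • one a1) ∧ W2.Winnable (D ∘ Sum.inr + k • one a2) := by
  obtain ⟨e, he, f, hf⟩ := h
  have h1 : e ∘ Sum.inl - D ∘ Sum.inl =
      W1.div (f ∘ Sum.inl) + (f (Sum.inr a2) - f (Sum.inl a1)) • one a1 := by
    rw [← bridgeJoin_div_comp_inl, ← hf]; rfl
  have h2 : e ∘ Sum.inr - D ∘ Sum.inr =
      W2.div (f ∘ Sum.inr) - (f (Sum.inr a2) - f (Sum.inl a1)) • one a2 := by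
    rw [← bridgeJoin_div_comp_inr, ← hf]; rfl
  refine ⟨f (Sum.inl a1) - f (Sum.inr a2),
    ⟨e ∘ Sum.inl, fun w => he _, f ∘ Sum.inl, ?_⟩, ⟨e ∘ Sum.inr, fun w => he _, f ∘ Sum.inr, ?_⟩⟩
  · linear_combination (norm := module) h1
  · linear_combination (norm := module) h2

lemma rank_bridgeJoin_le (D : U1 ⊕ U2 → ℤ) {c1 c2 : ℤ} (hc : c1 + c2 = 1) :
    (bridgeJoin W1 W2 a1 a2).rank D ≤
      W1.rank (D ∘ Sum.inl - c1 • one a1) + W2.rank (D ∘ Sum.inr - c2 • one a2) + 1 := by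
  have : Nonempty U1 := ⟨a1⟩
  have : Nonempty U2 := ⟨a2⟩
  obtain ⟨e1, he1, hdeg1, hnw1⟩ :=
    exists_effective_not_winnable_sub (G := W1) (D ∘ Sum.inl - c1 • one a1)
  obtain ⟨e2, he2, hdeg2, hnw2⟩ :=
    exists_effective_not_winnable_sub (G := W2) (D ∘ Sum.inr - c2 • one a2)
  have hnw : ¬ (bridgeJoin W1 W2 a1 a2).Winnable (D - Sum.elim e1 e2) := by
    intro h
    obtain ⟨k, h1, h2⟩ := h.exists_of_bridgeJoin
    rcases le_or_gt c1 k with hk | hk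
    · refine hnw1 (h1.mono fun w => ?_)
      have := smul_le_smul_of_nonneg_right hk (one_nonneg a1) w
      simp only [Pi.sub_apply, Pi.smul_apply, Function.comp_apply, Sum.elim_inl] at this ⊢
      linarith
    · refine hnw2 (h2.mono fun w => ?_)
      have := smul_le_smul_of_nonneg_right (show k ≤ -c2 by omega) (one_nonneg a2) w
      simp only [Pi.sub_apply, Pi.add_apply, Pi.smul_apply, Function.comp_apply,
        Sum.elim_inr, neg_smul] at this ⊢
      linarith
  have he : Effective (Sum.elim e1 e2) := fun w => by rcases w with w | w; exacts [he1 w, he2 w]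
  have hlt := rank_lt_deg_of_not_winnable_sub he hnw
  rw [deg_sum_elim, hdeg1, hdeg2] at hlt
  omega

end BridgeJoin

section GraphIso

variable {A B : Type} [Fintype A] [Fintype B] {G : MultiGraph A} {H : MultiGraph B}

lemma div_apply_equiv (φ : A ≃ B) (hE : ∀ a b, H.E (φ a) (φ b) = G.E a b) (g : B → ℤ) (a : A) :
    H.div g (φ a) = G.div (g ∘ φ) a :=
  (Fintype.sum_equiv φ _ _ fun u => by simp only [Function.comp_apply, hE]).symm

lemma MultiGraph.Winnable.of_comp_equiv (φ : A ≃ B) (hE : ∀ a b, H.E (φ a) (φ b) = G.E a b)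
    {d : B → ℤ} (h : G.Winnable (d ∘ φ)) : H.Winnable d := by
  obtain ⟨e, he, f, hf⟩ := h
  refine ⟨e ∘ φ.symm, fun b => he _, f ∘ φ.symm, funext fun b => ?_⟩
  have hb := congrFun hf (φ.symm b)
  simp only [Pi.sub_apply, Function.comp_apply, Equiv.apply_symm_apply] at hb
  rw [Pi.sub_apply, Function.comp_apply, hb, ← Equiv.apply_symm_apply φ b, div_apply_equiv φ hE,
    Equiv.symm_apply_apply, Function.comp_assoc, Equiv.symm_comp_self, Function.comp_id]

lemma rank_comp_equiv_le [Nonempty B] (φ : A ≃ B) (hE : ∀ a b, H.E (φ a) (φ b) = G.E a b)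
    (d : B → ℤ) : G.rank (d ∘ φ) ≤ H.rank d := by
  have : Nonempty A := φ.nonempty
  obtain ⟨e, he, hdeg, hnw⟩ := exists_effective_not_winnable_sub (G := H) d
  have hlt := rank_lt_deg_of_not_winnable_sub (G := G) (d := d ∘ φ) (e := e ∘ φ) (fun a => he _)
    fun h => hnw (Winnable.of_comp_equiv φ hE h)
  rw [deg_comp_equiv, hdeg] at hlt
  omega

lemma rank_comp_equiv [Nonempty B] (φ : A ≃ B) (hE : ∀ a b, H.E (φ a) (φ b) = G.E a b)
    (d : B → ℤ) : G.rank (d ∘ φ) = H.rank d := by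
  have : Nonempty A := φ.nonempty
  have hE' : ∀ a b, G.E (φ.symm a) (φ.symm b) = H.E a b := fun a b => by
    rw [← hE, Equiv.apply_symm_apply, Equiv.apply_symm_apply]
  refine le_antisymm (rank_comp_equiv_le φ hE d) ?_
  simpa [Function.comp_assoc] using rank_comp_equiv_le φ.symm hE' (d ∘ φ)

end GraphIso

lemma wrank_le_wrank_sub_one_add_one [Fintype V] [DecidableEq V]
    (G : MultiGraph V) (ω : V → ℕ) (d : V → ℤ) (v : V) :
    wrank G ω d ≤ wrank G ω (d - one v) + 1 := by
  have h := (bullet G ω).rank_le_rank_sub_one_add_one (Sum.elim d 0) (Sum.inl v)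
  rwa [← one_smul ℤ (one (Sum.inl v)), sum_elim_sub_smul_one_inl, one_smul] at h

section WeightedBridge

variable [DecidableEq V1] [DecidableEq V2]
  (G1 : MultiGraph V1) (G2 : MultiGraph V2) (ω1 : V1 → ℕ) (ω2 : V2 → ℕ) (v1 : V1) (v2 : V2)

/-- Each virtual vertex of `Ḡ•` hangs off a single vertex of `G`, so it stays on that vertex's
side of the bridge. -/
def bulletBridgeJoinEquiv :
    ((V1 ⊕ V2) ⊕ (Σ v : V1 ⊕ V2, Fin ((bridgeJoin G1 G2 v1 v2).loops v + Sum.elim ω1 ω2 v))) ≃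
      ((V1 ⊕ (Σ v : V1, Fin (G1.loops v + ω1 v))) ⊕
        (V2 ⊕ (Σ v : V2, Fin (G2.loops v + ω2 v)))) where
  toFun x :=
    match x with
    | .inl (.inl v) => .inl (.inl v)
    | .inl (.inr v) => .inr (.inl v)
    | .inr ⟨.inl v, i⟩ => .inl (.inr ⟨v, i⟩)
    | .inr ⟨.inr v, i⟩ => .inr (.inr ⟨v, i⟩)
  invFun x :=
    match x with
    | .inl (.inl v) => .inl (.inl v)
    | .inl (.inr ⟨v, i⟩) => .inr ⟨.inl v, i⟩
    | .inr (.inl v) => .inl (.inr v)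
    | .inr (.inr ⟨v, i⟩) => .inr ⟨.inr v, i⟩
  left_inv x := by rcases x with (v | v) | ⟨v | v, i⟩ <;> rfl
  right_inv x := by rcases x with (v | ⟨v, i⟩) | (v | ⟨v, i⟩) <;> rfl

lemma bridgeJoin_bullet_E_bulletBridgeJoinEquiv (a b) :
    (bridgeJoin (bullet G1 ω1) (bullet G2 ω2) (Sum.inl v1) (Sum.inl v2)).E
        (bulletBridgeJoinEquiv G1 G2 ω1 ω2 v1 v2 a) (bulletBridgeJoinEquiv G1 G2 ω1 ω2 v1 v2 b) =
      (bullet (bridgeJoin G1 G2 v1 v2) (Sum.elim ω1 ω2)).E a b := by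
  rcases a with (x | x) | ⟨x | x, i⟩ <;> rcases b with (y | y) | ⟨y | y, j⟩ <;>
    simp only [bulletBridgeJoinEquiv, Equiv.coe_fn_mk] <;> simp [bullet, bridgeJoin]

variable [Fintype V1] [Fintype V2]

lemma wrank_bridgeJoin_le (d : V1 ⊕ V2 → ℤ) {c1 c2 : ℤ} (hc : c1 + c2 = 1) :
    wrank (bridgeJoin G1 G2 v1 v2) (Sum.elim ω1 ω2) d ≤
      wrank G1 ω1 (d ∘ Sum.inl - c1 • one v1) + wrank G2 ω2 (d ∘ Sum.inr - c2 • one v2) + 1 := by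
  have : Nonempty (V1 ⊕ (Σ v : V1, Fin (G1.loops v + ω1 v))) := ⟨Sum.inl v1⟩
  have hD : Sum.elim d 0 = Sum.elim (Sum.elim (d ∘ Sum.inl) 0) (Sum.elim (d ∘ Sum.inr) 0) ∘
      bulletBridgeJoinEquiv G1 G2 ω1 ω2 v1 v2 := by
    funext x
    rcases x with (v | v) | ⟨v | v, i⟩ <;> rfl
  rw [wrank, hD, rank_comp_equiv _ (bridgeJoin_bullet_E_bulletBridgeJoinEquiv G1 G2 ω1 ω2 v1 v2)]
  have := rank_bridgeJoin_le (W1 := bullet G1 ω1) (W2 := bullet G2 ω2)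
    (a1 := Sum.inl v1) (a2 := Sum.inl v2)
    (Sum.elim (Sum.elim (d ∘ Sum.inl) 0) (Sum.elim (d ∘ Sum.inr) 0)) hc
  simp only [Sum.elim_comp_inl, Sum.elim_comp_inr, sum_elim_sub_smul_one_inl] at this
  exact this

end WeightedBridge

theorem statement_5_general {V1 V2 : Type} [Fintype V1] [DecidableEq V1] [Fintype V2] [DecidableEq V2]
    (G1 : MultiGraph V1) (G2 : MultiGraph V2)
    (ω1 : V1 → ℕ) (ω2 : V2 → ℕ) (v1 : V1) (v2 : V2) (d : V1 ⊕ V2 → ℤ) :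
    wrank (bridgeJoin G1 G2 v1 v2) (Sum.elim ω1 ω2) d ≤
      wrank G1 ω1 (d ∘ Sum.inl - one v1) + wrank G2 ω2 (d ∘ Sum.inr - one v2) +
      (if ¬ wBasePoint G1 ω1 (d ∘ Sum.inl) v1 ∧ ¬ wBasePoint G2 ω2 (d ∘ Sum.inr) v2
        then 2 else 1) := by
  have h10 := wrank_bridgeJoin_le G1 G2 ω1 ω2 v1 v2 d (c1 := 1) (c2 := 0) (by norm_num)
  have h01 := wrank_bridgeJoin_le G1 G2 ω1 ω2 v1 v2 d (c1 := 0) (c2 := 1) (by norm_num)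
  simp only [one_smul, zero_smul, sub_zero] at h10 h01
  have hv2 := wrank_le_wrank_sub_one_add_one G2 ω2 (d ∘ Sum.inr) v2
  split_ifs with hbase
  · linarith
  · rcases not_and_or.1 hbase with hb1 | hb2
    · have : wrank G1 ω1 (d ∘ Sum.inl - one v1) = wrank G1 ω1 (d ∘ Sum.inl) := not_not.1 hb1
      linarith
    · have : wrank G2 ω2 (d ∘ Sum.inr - one v2) = wrank G2 ω2 (d ∘ Sum.inr) := not_not.1 hb2
      linarith

/-- reinterpretation of the bridge inequality. -/
theorem statement_5 {V1 V2 : Type} [Fintype V1] [DecidableEq V1] [Fintype V2] [DecidableEq V2]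
    (G1 : MultiGraph V1) (G2 : MultiGraph V2)
    (hc1 : G1.Connected) (hc2 : G2.Connected)
    (ω1 : V1 → ℕ) (ω2 : V2 → ℕ) (v1 : V1) (v2 : V2) (d : V1 ⊕ V2 → ℤ) :
    wrank (bridgeJoin G1 G2 v1 v2) (Sum.elim ω1 ω2) d ≤
      wrank G1 ω1 (d ∘ Sum.inl - one v1) + wrank G2 ω2 (d ∘ Sum.inr - one v2) +
      (if ¬ wBasePoint G1 ω1 (d ∘ Sum.inl) v1 ∧ ¬ wBasePoint G2 ω2 (d ∘ Sum.inr) v2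
        then 2 else 1) :=
  statement_5_general G1 G2 ω1 ω2 v1 v2 d

end BN
end

section
/- Let G be a loopless finite connected graph, v0 a vertex, and d a v0-reduced divisor on G. If d(v0) < 0 then r_G(d) = −1, i.e., d is not linearly equivalent to any effective divisor. -/
open scoped Classical

namespace BN

variable {V V1 V2 : Type}

open MultiGraph

/-!
If `d + div f` were effective, look at the set `A` of vertices where `f` is maximal. At every
`u ∈ A` each edge leaving `A` drops `f` by at least one, so `(div f) u ≤ -outdeg_A u`. If
`v0 ∈ A` this makes `(d + div f) v0 ≤ d v0 < 0`; otherwise reducedness supplies `u ∈ A` with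
`d u < outdeg_A u`, and again `(d + div f) u < 0`.
-/

namespace MultiGraph

variable [Fintype V]

theorem rank_eq_neg_one_of_not_winnable (G : MultiGraph V) {d : V → ℤ} (hd : ¬ G.Winnable d) :
    G.rank d = -1 :=
  if_neg hd

variable [DecidableEq V]

theorem div_le_neg_outdeg (G : MultiGraph V) (f : V → ℤ) (A : Finset V) {u : V}
    (hmax : ∀ w, f w ≤ f u) (hout : ∀ w ∉ A, f w < f u) :
    G.div f u ≤ -(G.outdeg A u : ℤ) := by
  have hterm : ∀ w, (G.E u w : ℤ) * (f w - f u) ≤ if w ∉ A then -(G.E u w : ℤ) else 0 := by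
    intro w
    by_cases hw : w ∈ A
    · rw [if_neg (not_not.2 hw)]
      exact mul_nonpos_of_nonneg_of_nonpos (by positivity) (by linarith [hmax w])
    · rw [if_pos hw]
      nlinarith [hout w hw, (G.E u w).cast_nonneg (α := ℤ)]
  calc G.div f u ≤ ∑ w, if w ∉ A then -(G.E u w : ℤ) else 0 :=
        Finset.sum_le_sum fun w _ => hterm w
    _ = -(G.outdeg A u : ℤ) := by
        rw [← Finset.sum_filter, outdeg, Finset.sum_neg_distrib]
        push_cast
        rfl

theorem not_effective_add_div_of_reduced (G : MultiGraph V) {v0 : V} {d : V → ℤ}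
    (hred : G.Reduced v0 d) (hneg : d v0 < 0) (f : V → ℤ) :
    ¬ Effective (d + G.div f) := by
  intro he
  set A : Finset V := Finset.univ.filter fun v => ∀ w, f w ≤ f v
  have hA : ∀ {v}, v ∈ A ↔ ∀ w, f w ≤ f v := by simp [A]
  have hdiv : ∀ u ∈ A, G.div f u ≤ -(G.outdeg A u : ℤ) := by
    intro u hu
    refine G.div_le_neg_outdeg f A (hA.1 hu) fun w hw => ?_
    obtain ⟨x, hx⟩ : ∃ x, f w < f x := by simpa [hA] using hw
    linarith [hA.1 hu x]
  by_cases hv0 : v0 ∈ A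
  · linarith [he v0, hdiv v0 hv0, show (d + G.div f) v0 = d v0 + G.div f v0 from rfl]
  · obtain ⟨v, -, hv⟩ := Finset.exists_max_image Finset.univ f ⟨v0, Finset.mem_univ v0⟩
    obtain ⟨u, huA, hu⟩ := hred.2 A ⟨v, hA.2 fun w => hv w (Finset.mem_univ w)⟩ hv0
    linarith [he u, hdiv u huA, show (d + G.div f) u = d u + G.div f u from rfl]

theorem not_winnable_of_reduced (G : MultiGraph V) {v0 : V} {d : V → ℤ}
    (hred : G.Reduced v0 d) (hneg : d v0 < 0) : ¬ G.Winnable d := by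
  rintro ⟨e, he, f, hf⟩
  have he_eq : e = d + G.div f := by rw [← hf]; abel
  exact G.not_effective_add_div_of_reduced hred hneg f (he_eq ▸ he)

end MultiGraph

theorem statement_11_general {V : Type} [Fintype V] [DecidableEq V]
    (G : MultiGraph V)
    (v0 : V) (d : V → ℤ) (hred : G.Reduced v0 d) (hneg : d v0 < 0) :
    G.rank d = -1 ∧ ¬ G.Winnable d :=
  have hW := G.not_winnable_of_reduced hred hneg
  ⟨G.rank_eq_neg_one_of_not_winnable hW, hW⟩

/-- a `v0`-reduced divisor negative at `v0` has rank `-1`. -/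
theorem statement_11 {V : Type} [Fintype V] [DecidableEq V]
    (G : MultiGraph V) (hl : G.Loopless) (hc : G.Connected)
    (v0 : V) (d : V → ℤ) (hred : G.Reduced v0 d) (hneg : d v0 < 0) :
    G.rank d = -1 ∧ ¬ G.Winnable d :=
  statement_11_general G v0 d hred hneg

end BN
end
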